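/- (Rule of Fully Connected Companions) Let A and B be the z-matrix and w-matrix of a singular sequence. If A is fully connected, then the trace of B equals 0; likewise, if B is fully connected, then the trace of A equals 0. -/

import Mathlib

open Filter Finset

/-- `Zq δ z k l` is the quantity `Z_{lk} = δ_{kl}^3 · (z_k − z_l)`
(and, applied to `w`, the quantity `W_{lk}`). -/
noncomputable def Zq {n : ℕ} (δ : Fin n → Fin n → ℂ) (z : Fin n → ℂ) (k l : Fin n) : ℂ :=
  δ k l ^ 3 * (z k - z l)

/-- A singular sequence of normalized central configurations for the masses `m`:
sequences `z^{(N)}, w^{(N)} ∈ ℂ^n`, symmetric `δ^{(N)}`, and positive reals `ε_N → 0`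
such that every term satisfies the central configuration equations
`z_k = ∑_{l≠k} m_l Z_{lk}`, `w_k = ∑_{l≠k} m_l W_{lk}`, the normalization
`δ_{kl}^2 z_{kl} w_{kl} = 1` (`k ≠ l`), the maximum of the `|z_k|, |Z_{kl}|`
(resp. `|w_k|, |W_{kl}|`) equals `ε_N^{-2}`, and all the sequences
`ε_N^2 z_k, ε_N^2 w_k, ε_N^2 Z_{kl}, ε_N^2 W_{kl}` converge. -/
structure SingularSeq (n : ℕ) (m : Fin n → ℂ) : Type where
  z : ℕ → Fin n → ℂ
  w : ℕ → Fin n → ℂ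
  delta : ℕ → Fin n → Fin n → ℂ
  eps : ℕ → ℝ
  eps_pos : ∀ N, 0 < eps N
  eps_lim : Tendsto eps atTop (nhds 0)
  delta_symm : ∀ N, ∀ k l : Fin n, delta N k l = delta N l k
  eq_z : ∀ N, ∀ k : Fin n, z N k = ∑ l ∈ univ.erase k, m l * Zq (delta N) (z N) k l
  eq_w : ∀ N, ∀ k : Fin n, w N k = ∑ l ∈ univ.erase k, m l * Zq (delta N) (w N) k l
  normalize : ∀ N, ∀ k l : Fin n, k ≠ l →
    delta N k l ^ 2 * (z N l - z N k) * (w N l - w N k) = 1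
  maxZ : ∀ N, IsGreatest
      ({x : ℝ | ∃ k, x = ‖z N k‖} ∪
        {x : ℝ | ∃ k l, k ≠ l ∧ x = ‖Zq (delta N) (z N) k l‖})
      (eps N ^ (-2 : ℤ))
  maxW : ∀ N, IsGreatest
      ({x : ℝ | ∃ k, x = ‖w N k‖} ∪
        {x : ℝ | ∃ k l, k ≠ l ∧ x = ‖Zq (delta N) (w N) k l‖})
      (eps N ^ (-2 : ℤ))
  conv_z : ∀ k : Fin n, ∃ L : ℂ,
    Tendsto (fun N => (eps N : ℂ) ^ 2 * z N k) atTop (nhds L)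
  conv_w : ∀ k : Fin n, ∃ L : ℂ,
    Tendsto (fun N => (eps N : ℂ) ^ 2 * w N k) atTop (nhds L)
  conv_Z : ∀ k l : Fin n, k ≠ l → ∃ L : ℂ,
    Tendsto (fun N => (eps N : ℂ) ^ 2 * Zq (delta N) (z N) k l) atTop (nhds L)
  conv_W : ∀ k l : Fin n, k ≠ l → ∃ L : ℂ,
    Tendsto (fun N => (eps N : ℂ) ^ 2 * Zq (delta N) (w N) k l) atTop (nhds L)

/-- `A` and `B` are the z-matrix and the w-matrix of the singular sequence `S`:
symmetric `{0,1}`-matrices whose entries record which of the (convergent) sequences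
`ε_N^2 z_i`, `ε_N^2 Z_{ij}` (resp. `ε_N^2 w_i`, `ε_N^2 W_{ij}`) have nonzero limit. -/
structure IsZWMatrices {n : ℕ} {m : Fin n → ℂ} (S : SingularSeq n m)
    (A B : Matrix (Fin n) (Fin n) ℕ) : Prop where
  zeroOne_A : ∀ i j, A i j = 0 ∨ A i j = 1
  symm_A : ∀ i j, A i j = A j i
  zeroOne_B : ∀ i j, B i j = 0 ∨ B i j = 1
  symm_B : ∀ i j, B i j = B j i
  diag_A : ∀ i, A i i = 1 ↔
    ¬ Tendsto (fun N => (S.eps N : ℂ) ^ 2 * S.z N i) atTop (nhds 0)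
  off_A : ∀ i j, i ≠ j → (A i j = 1 ↔
    ¬ Tendsto (fun N => (S.eps N : ℂ) ^ 2 * Zq (S.delta N) (S.z N) i j) atTop (nhds 0))
  diag_B : ∀ i, B i i = 1 ↔
    ¬ Tendsto (fun N => (S.eps N : ℂ) ^ 2 * S.w N i) atTop (nhds 0)
  off_B : ∀ i j, i ≠ j → (B i j = 1 ↔
    ¬ Tendsto (fun N => (S.eps N : ℂ) ^ 2 * Zq (S.delta N) (S.w N) i j) atTop (nhds 0))

/-- The stroke graph of a matrix: an edge between `i` and `j` (`i ≠ j`) iff the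
corresponding entry equals `1` (the matrices in question are symmetric). -/
def strokeGraph {n : ℕ} (A : Matrix (Fin n) (Fin n) ℕ) : SimpleGraph (Fin n) where
  Adj i j := i ≠ j ∧ A i j = 1 ∧ A j i = 1
  symm := ⟨fun _ _ h => ⟨h.1.symm, h.2.2, h.2.1⟩⟩
  loopless := ⟨fun _ h => h.1 rfl⟩

/-- `I` is (the vertex set of) a connected component of the stroke graph of `A`. -/
def IsComponent {n : ℕ} (A : Matrix (Fin n) (Fin n) ℕ) (I : Finset (Fin n)) : Prop :=
  ∃ v : Fin n, ∀ u : Fin n, u ∈ I ↔ (strokeGraph A).Reachable u v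

/-!
Summing the equations `w_k = ∑_{l≠k} m_l W_{lk}` against the masses gives `∑ m_k w_k = 0`,
since the terms `m_k m_l W_{lk}` cancel in pairs. The normalization gives `δ_{kl}⁴ = Z_{lk} W_{lk}`,
hence `ε |δ_{kl}| ≤ 1`, and `w_k − w_l = δ_{kl} / Z_{lk}`; so along a stroke `k – l` of `A`, where
`ε² Z_{lk}` has a nonzero limit, `ε² (w_k − w_l) → 0`. If `A` is fully connected, all `ε² w_k`
therefore share one limit `L`, and `(∑ m_k) L = 0` forces `L = 0`: the diagonal of `B` vanishes.
Exchanging `z` and `w` gives the other half.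
-/

open Topology

theorem Finset.sum_sum_eq_zero_of_antisymm {ι M : Type*} [AddCommGroup M] [IsAddTorsionFree M]
    (s : Finset ι) (F : ι → ι → M) (hF : ∀ k l, F k l = -F l k) :
    ∑ k ∈ s, ∑ l ∈ s, F k l = 0 := by
  refine self_eq_neg.mp ?_
  conv_lhs => rw [Finset.sum_comm]
  simp only [← Finset.sum_neg_distrib]
  exact Finset.sum_congr rfl fun _ _ => Finset.sum_congr rfl fun _ _ => hF _ _

theorem SimpleGraph.Reachable.tendsto_sub_nhds_zero {V α E : Type*} [AddCommGroup E]
    [TopologicalSpace E] [IsTopologicalAddGroup E] {G : SimpleGraph V} {l : Filter α}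
    {f : α → V → E} (hadj : ∀ u v, G.Adj u v → Tendsto (fun a => f a u - f a v) l (𝓝 0))
    {u v : V} (h : G.Reachable u v) : Tendsto (fun a => f a u - f a v) l (𝓝 0) := by
  obtain ⟨p⟩ := h
  induction p with
  | nil => simpa using tendsto_const_nhds
  | cons hxy _ ih => simpa using (hadj _ _ hxy).add ih

theorem sum_mul_eq_zero_of_eq_sum_Zq {n : ℕ} {m : Fin n → ℂ} {δ : Fin n → Fin n → ℂ}
    (hδ : ∀ k l, δ k l = δ l k) {z : Fin n → ℂ}
    (hz : ∀ k, z k = ∑ l ∈ univ.erase k, m l * Zq δ z k l) : ∑ k, m k * z k = 0 := by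
  have hdiag : ∀ k, m k * (m k * Zq δ z k k) = 0 := fun k => by simp [Zq]
  calc ∑ k, m k * z k = ∑ k, ∑ l, m k * (m l * Zq δ z k l) := by
        refine Finset.sum_congr rfl fun k _ => ?_
        rw [hz k, Finset.mul_sum,
          Finset.sum_erase (f := fun l => m k * (m l * Zq δ z k l)) univ (hdiag k)]
    _ = 0 := Finset.sum_sum_eq_zero_of_antisymm _ _ fun k l => by
        simp only [Zq, hδ l k]; ring

namespace SingularSeq

variable {n : ℕ} {m : Fin n → ℂ} (S : SingularSeq n m)

def swap : SingularSeq n m where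
  z := S.w
  w := S.z
  delta := S.delta
  eps := S.eps
  eps_pos := S.eps_pos
  eps_lim := S.eps_lim
  delta_symm := S.delta_symm
  eq_z := S.eq_w
  eq_w := S.eq_z
  normalize N k l h := by linear_combination S.normalize N k l h
  maxZ := S.maxW
  maxW := S.maxZ
  conv_z := S.conv_w
  conv_w := S.conv_z
  conv_Z := S.conv_W
  conv_W := S.conv_Z

theorem sum_mul_w_eq_zero (N : ℕ) : ∑ k, m k * S.w N k = 0 :=
  sum_mul_eq_zero_of_eq_sum_Zq (S.delta_symm N) (S.eq_w N)

theorem eps_sq_mul_norm_Zq_z_le_one (N : ℕ) {k l : Fin n} (hkl : k ≠ l) :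
    S.eps N ^ 2 * ‖Zq (S.delta N) (S.z N) k l‖ ≤ 1 := by
  have hε := S.eps_pos N
  have hle := (S.maxZ N).2 (Or.inr ⟨k, l, hkl, rfl⟩)
  calc S.eps N ^ 2 * ‖Zq (S.delta N) (S.z N) k l‖ ≤ S.eps N ^ 2 * S.eps N ^ (-2 : ℤ) := by
        gcongr
    _ = 1 := by simp [zpow_neg, hε.ne']

theorem delta_pow_four (N : ℕ) {k l : Fin n} (hkl : k ≠ l) :
    S.delta N k l ^ 4 = Zq (S.delta N) (S.z N) k l * Zq (S.delta N) (S.w N) k l := by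
  simp only [Zq]
  linear_combination -(S.delta N k l ^ 4) * S.normalize N k l hkl

theorem eps_mul_norm_delta_le_one (N : ℕ) {k l : Fin n} (hkl : k ≠ l) :
    S.eps N * ‖S.delta N k l‖ ≤ 1 := by
  have hε := (S.eps_pos N).le
  refine (pow_le_one_iff_of_nonneg (by positivity) four_ne_zero).mp ?_
  calc (S.eps N * ‖S.delta N k l‖) ^ 4
      = (S.eps N ^ 2 * ‖Zq (S.delta N) (S.z N) k l‖) *
          (S.eps N ^ 2 * ‖Zq (S.delta N) (S.w N) k l‖) := by
        rw [mul_pow, ← norm_pow, S.delta_pow_four N hkl, norm_mul]; ring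
    _ ≤ 1 * 1 := by
        gcongr
        exacts [S.eps_sq_mul_norm_Zq_z_le_one N hkl, S.swap.eps_sq_mul_norm_Zq_z_le_one N hkl]
    _ = 1 := one_mul 1

theorem w_sub_eq_div_Zq (N : ℕ) {k l : Fin n} (hkl : k ≠ l) :
    S.w N k - S.w N l = S.delta N k l / Zq (S.delta N) (S.z N) k l := by
  have hnorm := S.normalize N k l hkl
  have hZ : Zq (S.delta N) (S.z N) k l ≠ 0 := by
    rintro h
    have h4 := S.delta_pow_four N hkl
    rw [h, zero_mul, pow_eq_zero_iff four_ne_zero] at h4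
    simp [h4] at hnorm
  rw [eq_div_iff hZ, Zq]
  linear_combination S.delta N k l * hnorm

theorem tendsto_eps_sq_mul_w_sub {k l : Fin n} (hkl : k ≠ l)
    (hZ : ¬ Tendsto (fun N => (S.eps N : ℂ) ^ 2 * Zq (S.delta N) (S.z N) k l) atTop (𝓝 0)) :
    Tendsto (fun N => (S.eps N : ℂ) ^ 2 * (S.w N k - S.w N l)) atTop (𝓝 0) := by
  obtain ⟨a, ha⟩ := S.conv_Z k l hkl
  have ha0 : a ≠ 0 := by rintro rfl; exact hZ ha
  -- `ε² (w_k − w_l) = ε³ · (ε δ) / (ε² Z_{lk})`, where `|ε δ| ≤ 1` and `ε² Z_{lk} → a ≠ 0`.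
  have hnum : Tendsto (fun N => (S.eps N : ℂ) ^ 3 * ((S.eps N : ℂ) * S.delta N k l))
      atTop (𝓝 0) := by
    refine squeeze_zero_norm (a := fun N => S.eps N ^ 3) (fun N => ?_) ?_
    · have hε := (S.eps_pos N).le
      simpa [abs_of_nonneg hε, mul_assoc] using
        mul_le_mul_of_nonneg_left (S.eps_mul_norm_delta_le_one N hkl) (pow_nonneg hε 3)
    · simpa using S.eps_lim.pow 3
  refine (zero_div a ▸ hnum.div ha ha0).congr fun N => ?_
  have hε : (S.eps N : ℂ) ≠ 0 := by exact_mod_cast (S.eps_pos N).ne'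
  rw [Pi.div_apply, S.w_sub_eq_div_Zq N hkl]
  field_simp

end SingularSeq

namespace IsZWMatrices

variable {n : ℕ} {m : Fin n → ℂ} {S : SingularSeq n m} {A B : Matrix (Fin n) (Fin n) ℕ}

theorem swap (h : IsZWMatrices S A B) : IsZWMatrices S.swap B A where
  zeroOne_A := h.zeroOne_B
  symm_A := h.symm_B
  zeroOne_B := h.zeroOne_A
  symm_B := h.symm_A
  diag_A := h.diag_B
  off_A := h.off_B
  diag_B := h.diag_A
  off_B := h.off_A

theorem trace_B_eq_zero (hAB : IsZWMatrices S A B)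
    (hm : ∑ k, m k ≠ 0) (hconn : (strokeGraph A).Connected) : Matrix.trace B = 0 := by
  choose L hL using S.conv_w
  have hconst : ∀ u v, L u = L v := fun u v => by
    have hdiff := (hconn.preconnected u v).tendsto_sub_nhds_zero
      (f := fun N k => (S.eps N : ℂ) ^ 2 * S.w N k) fun u v huv => by
        simpa only [mul_sub] using
          S.tendsto_eps_sq_mul_w_sub huv.1 ((hAB.off_A u v huv.1).mp huv.2.1)
    exact tendsto_nhds_unique (hL u) (by simpa using hdiff.add (hL v))
  have hsum : ∑ k, m k * L k = 0 := by
    refine tendsto_nhds_unique (tendsto_finsetSum _ fun k _ => (hL k).const_mul (m k)) ?_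
    refine tendsto_const_nhds.congr fun N => ?_
    simp only [mul_left_comm (m _), ← Finset.mul_sum, S.sum_mul_w_eq_zero, mul_zero]
  obtain ⟨v⟩ := hconn.nonempty
  have hLv : L v = 0 := by
    simp only [hconst _ v, ← Finset.sum_mul] at hsum
    exact (mul_eq_zero.mp hsum).resolve_left hm
  refine Finset.sum_eq_zero fun k _ => (hAB.zeroOne_B k k).resolve_right fun hk => ?_
  have hk0 := hL k
  rw [hconst k v, hLv] at hk0
  exact (hAB.diag_B k).mp hk hk0

end IsZWMatrices

theorem rule_of_fully_connected_companions_general (n : ℕ) (m : Fin n → ℂ)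
    (hm : ∀ I : Finset (Fin n), I.Nonempty → ∑ k ∈ I, m k ≠ 0)
    (S : SingularSeq n m) (A B : Matrix (Fin n) (Fin n) ℕ)
    (hAB : IsZWMatrices S A B) :
    ((strokeGraph A).Connected → Matrix.trace B = 0) ∧
    ((strokeGraph B).Connected → Matrix.trace A = 0) := by
  exact ⟨fun h => hAB.trace_B_eq_zero (hm univ (univ_nonempty_iff.2 h.nonempty)) h,
    fun h => hAB.swap.trace_B_eq_zero (hm univ (univ_nonempty_iff.2 h.nonempty)) h⟩

theorem rule_of_fully_connected_companions (n : ℕ) (hn : 2 ≤ n) (m : Fin n → ℂ)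
    (hm : ∀ I : Finset (Fin n), I.Nonempty → ∑ k ∈ I, m k ≠ 0)
    (S : SingularSeq n m) (A B : Matrix (Fin n) (Fin n) ℕ)
    (hAB : IsZWMatrices S A B) :
    ((strokeGraph A).Connected → Matrix.trace B = 0) ∧
    ((strokeGraph B).Connected → Matrix.trace A = 0) :=
  rule_of_fully_connected_companions_general n m hm S A B hAB
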